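/- Let d ≥ 1, let Q : EuclideanSpace ℝ d → ℝ be differentiable with gradient ∇Q that is μ-Lipschitz and λ-strongly monotone (λ, μ > 0), and let w* satisfy ∇Q(w*) = 0. Let n > f ≥ 0 be integers, σ ≥ 0, let w be a point, and write x = w − w*. Let H be an index set of size n − f and T ⊆ H with |T| ≥ n − 2f. Let {gᵢ}_{i∈H} be independent integrable random vectors, each with mean E[gᵢ] = ∇Q(w) and E‖gᵢ − ∇Q(w)‖² ≤ σ². Define the real random variable φ = Σ_{i∈T} ⟨x, gᵢ⟩ − f·‖x‖·max_{i∈H} ‖gᵢ‖. Then E[φ] ≥ (nλ − f(2λ + μ))·‖x‖² − f·σ·(1 + √(n−f−1))·‖x‖. -/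

import Mathlib

open MeasureTheory ProbabilityTheory
open scoped RealInnerProductSpace

/-!
Pointwise, `max_{i∈H} ‖gᵢ‖ ≤ ‖∇Q(w)‖ + (∑_{i∈H} ‖gᵢ - ∇Q(w)‖²)^{1/2}`, so Jensen's inequality for
the square root gives `E[max_{i∈H} ‖gᵢ‖] ≤ ‖∇Q(w)‖ + σ √(n - f) ≤ ‖∇Q(w)‖ + σ (1 + √(n - f - 1))`.
With `E⟨x, gᵢ⟩ = ⟨x, ∇Q(w)⟩ ≥ λ‖x‖²`, `‖∇Q(w)‖ ≤ μ‖x‖` and `|T| ≥ n - 2f` the bound is then linear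
arithmetic.
-/

open Finset

lemma sqrt_le_one_add_sqrt_sub_one {m : ℝ} (hm : 1 ≤ m) : √m ≤ 1 + √(m - 1) := by
  have h := Real.sq_sqrt (sub_nonneg.mpr hm)
  rw [Real.sqrt_le_left (by positivity)]
  nlinarith [Real.sqrt_nonneg (m - 1)]

lemma sqrt_le_one_add_abs (z : ℝ) : √z ≤ 1 + |z| := by
  refine (Real.sqrt_le_sqrt (le_abs_self z)).trans ?_
  rw [Real.sqrt_le_left (by positivity)]
  nlinarith [abs_nonneg z]

section Norm

variable {ι E : Type*} [SeminormedAddCommGroup E]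

lemma norm_le_sqrt_sum_sq_norm (s : Finset ι) (v : ι → E) {i : ι} (hi : i ∈ s) :
    ‖v i‖ ≤ √(∑ j ∈ s, ‖v j‖ ^ 2) :=
  Real.le_sqrt_of_sq_le (single_le_sum (fun j _ => sq_nonneg ‖v j‖) hi)

lemma biSup_norm_le_norm_add_sqrt_sum_sq (s : Finset ι) (v : ι → E) (c : E) :
    ⨆ i ∈ s, ‖v i‖ ≤ ‖c‖ + √(∑ i ∈ s, ‖v i - c‖ ^ 2) := by
  have h0 : 0 ≤ ‖c‖ + √(∑ i ∈ s, ‖v i - c‖ ^ 2) := by positivity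
  refine Real.iSup_le (fun i => Real.iSup_le (fun hi => ?_) h0) h0
  exact (norm_le_norm_add_norm_sub' (v i) c).trans
    (add_le_add_right (norm_le_sqrt_sum_sq_norm s (fun j => v j - c) hi) _)

lemma biSup_norm_le_sum_norm (s : Finset ι) (v : ι → E) :
    ⨆ i ∈ s, ‖v i‖ ≤ ∑ i ∈ s, ‖v i‖ := by
  have h0 : 0 ≤ ∑ i ∈ s, ‖v i‖ := by positivity
  exact Real.iSup_le (fun i => Real.iSup_le
    (fun hi => single_le_sum (fun j _ => norm_nonneg (v j)) hi) h0) h0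

end Norm

section Integral

variable {Ω : Type*} {mΩ : MeasurableSpace Ω} {μ : Measure Ω}

lemma MeasureTheory.Integrable.sqrt [IsFiniteMeasure μ] {Z : Ω → ℝ} (hZ : Integrable Z μ) :
    Integrable (fun ω => √(Z ω)) μ := by
  refine ((integrable_const 1).add hZ.norm).mono'
    (Real.continuous_sqrt.comp_aestronglyMeasurable hZ.1) (ae_of_all _ fun ω => ?_)
  rw [Real.norm_of_nonneg (Real.sqrt_nonneg _)]
  exact sqrt_le_one_add_abs (Z ω)

lemma integral_sqrt_le_sqrt_integral [IsProbabilityMeasure μ] {Z : Ω → ℝ} (hZ : Integrable Z μ)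
    (hZ0 : 0 ≤ᵐ[μ] Z) : ∫ ω, √(Z ω) ∂μ ≤ √(∫ ω, Z ω ∂μ) :=
  Real.strictConcaveOn_sqrt.concaveOn.le_map_integral Real.continuous_sqrt.continuousOn
    isClosed_Ici hZ0 hZ hZ.sqrt

variable {ι E : Type*} [NormedAddCommGroup E] {g : ι → Ω → E}

lemma integrable_biSup_norm [IsFiniteMeasure μ] (s : Finset ι)
    (hg : ∀ i ∈ s, Integrable (g i) μ) : Integrable (fun ω => ⨆ i ∈ s, ‖g i ω‖) μ := by
  have hmeas : AEMeasurable (fun ω => ⨆ i ∈ s, ‖g i ω‖) μ :=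
    AEMeasurable.biSup _ s.countable_toSet fun i hi => (hg i hi).norm.1.aemeasurable
  refine (integrable_finsetSum s fun i hi => (hg i hi).norm).mono' hmeas.aestronglyMeasurable
    (ae_of_all _ fun ω => ?_)
  rw [Real.norm_of_nonneg (Real.iSup_nonneg fun i => Real.iSup_nonneg fun _ => norm_nonneg _)]
  simpa only [Finset.sum_apply] using biSup_norm_le_sum_norm s (g · ω)

lemma integral_biSup_norm_le [IsProbabilityMeasure μ] (s : Finset ι) (c : E) {σ : ℝ} (hσ : 0 ≤ σ)
    (hg : ∀ i ∈ s, Integrable (g i) μ)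
    (hg2 : ∀ i ∈ s, Integrable (fun ω => ‖g i ω - c‖ ^ 2) μ)
    (hvar : ∀ i ∈ s, ∫ ω, ‖g i ω - c‖ ^ 2 ∂μ ≤ σ ^ 2) :
    ∫ ω, ⨆ i ∈ s, ‖g i ω‖ ∂μ ≤ ‖c‖ + √(#s) * σ := by
  have hS : Integrable (fun ω => ∑ i ∈ s, ‖g i ω - c‖ ^ 2) μ := integrable_finsetSum s hg2
  calc ∫ ω, ⨆ i ∈ s, ‖g i ω‖ ∂μ
      ≤ ∫ ω, ‖c‖ + √(∑ i ∈ s, ‖g i ω - c‖ ^ 2) ∂μ :=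
        integral_mono (integrable_biSup_norm s hg) ((integrable_const _).add hS.sqrt)
          fun ω => biSup_norm_le_norm_add_sqrt_sum_sq s (g · ω) c
    _ = ‖c‖ + ∫ ω, √(∑ i ∈ s, ‖g i ω - c‖ ^ 2) ∂μ := by
        rw [integral_add (integrable_const _) hS.sqrt, integral_const, probReal_univ, one_smul]
    _ ≤ ‖c‖ + √(∑ i ∈ s, ∫ ω, ‖g i ω - c‖ ^ 2 ∂μ) := by
        rw [← integral_finsetSum s hg2]
        gcongr
        exact integral_sqrt_le_sqrt_integral hS (ae_of_all _ fun ω => by positivity)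
    _ ≤ ‖c‖ + √(#s * σ ^ 2) := by
        gcongr
        simpa using sum_le_sum hvar
    _ = ‖c‖ + √(#s) * σ := by
        rw [Real.sqrt_mul (Nat.cast_nonneg _), Real.sqrt_sq hσ]

lemma integral_sum_inner_eq {F : Type*} [NormedAddCommGroup F] [InnerProductSpace ℝ F]
    [CompleteSpace F] (s : Finset ι) {g : ι → Ω → F} (x c : F)
    (hg : ∀ i ∈ s, Integrable (g i) μ) (hmean : ∀ i ∈ s, ∫ ω, g i ω ∂μ = c) :
    ∫ ω, ∑ i ∈ s, ⟪x, g i ω⟫ ∂μ = #s * ⟪x, c⟫ := by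
  rw [integral_finsetSum s fun i hi => (hg i hi).const_inner x,
    sum_congr rfl fun i hi => by rw [integral_inner (hg i hi), hmean i hi], sum_const, nsmul_eq_mul]

end Integral

theorem expected_phi_lower_bound_general {d : ℕ}
    (gradQ : EuclideanSpace ℝ (Fin d) → EuclideanSpace ℝ (Fin d))
    {lam mu : ℝ} (hlam : 0 < lam)
    (hLip : ∀ a b, ‖gradQ a - gradQ b‖ ≤ mu * ‖a - b‖)
    (hSM : ∀ a b, lam * ‖a - b‖ ^ 2 ≤ ⟪a - b, gradQ a - gradQ b⟫)
    (wstar : EuclideanSpace ℝ (Fin d)) (hmin : gradQ wstar = 0)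
    {n f : ℕ} (hfn : f < n) {σ : ℝ} (hσ : 0 ≤ σ)
    (w x : EuclideanSpace ℝ (Fin d)) (hx : x = w - wstar)
    {ι : Type*} (H T : Finset ι) (hH : H.card = n - f)
    (hT : T ⊆ H) (hTcard : n - 2 * f ≤ T.card)
    {Ω : Type*} [MeasureSpace Ω] [IsProbabilityMeasure (ℙ : Measure Ω)]
    (g : ι → Ω → EuclideanSpace ℝ (Fin d))
    (hint : ∀ i ∈ H, Integrable (g i))
    (hmean : ∀ i ∈ H, ∫ ω, g i ω ∂(ℙ : MeasureTheory.Measure Ω) = gradQ w)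
    (hint2 : ∀ i ∈ H, Integrable (fun ω => ‖g i ω - gradQ w‖ ^ 2))
    (hvar : ∀ i ∈ H, ∫ ω, ‖g i ω - gradQ w‖ ^ 2 ∂(ℙ : MeasureTheory.Measure Ω) ≤ σ ^ 2) :
    ((n : ℝ) * lam - (f : ℝ) * (2 * lam + mu)) * ‖x‖ ^ 2 -
        (f : ℝ) * σ * (1 + Real.sqrt ((n : ℝ) - (f : ℝ) - 1)) * ‖x‖ ≤
      ∫ ω, ((∑ i ∈ T, ⟪x, g i ω⟫) - (f : ℝ) * ‖x‖ * (⨆ i ∈ H, ‖g i ω‖)) ∂(ℙ : MeasureTheory.Measure Ω) := by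
  have hip : lam * ‖x‖ ^ 2 ≤ ⟪x, gradQ w⟫ := by simpa [hx, hmin] using hSM w wstar
  have hgrad : ‖gradQ w‖ ≤ mu * ‖x‖ := by simpa [hx, hmin] using hLip w wstar
  have hTint : ∀ i ∈ T, Integrable (g i) := fun i hi => hint i (hT hi)
  have hTcard' : (n : ℝ) - 2 * f ≤ #T := by
    rw [sub_le_iff_le_add]
    exact_mod_cast (by omega : n ≤ #T + 2 * f)
  have hf1 : (1 : ℝ) ≤ n - f := by
    rw [le_sub_iff_add_le']
    exact_mod_cast hfn
  have hmax : ∫ ω, ⨆ i ∈ H, ‖g i ω‖ ≤ mu * ‖x‖ + (1 + √((n : ℝ) - f - 1)) * σ := by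
    refine (integral_biSup_norm_le H (gradQ w) hσ hint hint2 hvar).trans ?_
    rw [hH, Nat.cast_sub hfn.le]
    gcongr
    exact sqrt_le_one_add_sqrt_sub_one hf1
  rw [integral_sub (integrable_finsetSum T fun i hi => (hTint i hi).const_inner x)
    ((integrable_biSup_norm H hint).const_mul _), integral_const_mul,
    integral_sum_inner_eq T x (gradQ w) hTint fun i hi => hmean i (hT hi)]
  have hlx : 0 ≤ lam * ‖x‖ ^ 2 := by positivity
  have hfx : 0 ≤ (f : ℝ) * ‖x‖ := by positivity
  linarith [mul_le_mul_of_nonneg_left hmax hfx, mul_le_mul_of_nonneg_right hTcard' hlx,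
    mul_le_mul_of_nonneg_left hip (Nat.cast_nonneg (α := ℝ) #T)]

/-- Eqns. (53)–(56) of Appendix A-C: lower bound on the expectation of
`φ = Σ_{i∈T} ⟨x, gᵢ⟩ − f‖x‖·max_{i∈H}‖gᵢ‖`. -/
theorem expected_phi_lower_bound {d : ℕ} (hd : 0 < d)
    (Q : EuclideanSpace ℝ (Fin d) → ℝ)
    (gradQ : EuclideanSpace ℝ (Fin d) → EuclideanSpace ℝ (Fin d))
    (hQ : ∀ x, HasGradientAt Q (gradQ x) x)
    {lam mu : ℝ} (hlam : 0 < lam) (hmu : 0 < mu)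
    (hLip : ∀ a b, ‖gradQ a - gradQ b‖ ≤ mu * ‖a - b‖)
    (hSM : ∀ a b, lam * ‖a - b‖ ^ 2 ≤ ⟪a - b, gradQ a - gradQ b⟫)
    (wstar : EuclideanSpace ℝ (Fin d)) (hmin : gradQ wstar = 0)
    {n f : ℕ} (hfn : f < n) {σ : ℝ} (hσ : 0 ≤ σ)
    (w x : EuclideanSpace ℝ (Fin d)) (hx : x = w - wstar)
    {ι : Type*} (H T : Finset ι) (hH : H.card = n - f)
    (hT : T ⊆ H) (hTcard : n - 2 * f ≤ T.card)
    {Ω : Type*} [MeasureSpace Ω] [IsProbabilityMeasure (ℙ : Measure Ω)]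
    (g : ι → Ω → EuclideanSpace ℝ (Fin d)) (hmeas : ∀ i, Measurable (g i))
    (hindep : iIndepFun (fun i : H => g i) ℙ)
    (hint : ∀ i ∈ H, Integrable (g i))
    (hmean : ∀ i ∈ H, ∫ ω, g i ω ∂(ℙ : MeasureTheory.Measure Ω) = gradQ w)
    (hint2 : ∀ i ∈ H, Integrable (fun ω => ‖g i ω - gradQ w‖ ^ 2))
    (hvar : ∀ i ∈ H, ∫ ω, ‖g i ω - gradQ w‖ ^ 2 ∂(ℙ : MeasureTheory.Measure Ω) ≤ σ ^ 2) :
    ((n : ℝ) * lam - (f : ℝ) * (2 * lam + mu)) * ‖x‖ ^ 2 -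
        (f : ℝ) * σ * (1 + Real.sqrt ((n : ℝ) - (f : ℝ) - 1)) * ‖x‖ ≤
      ∫ ω, ((∑ i ∈ T, ⟪x, g i ω⟫) - (f : ℝ) * ‖x‖ * (⨆ i ∈ H, ‖g i ω‖)) ∂(ℙ : MeasureTheory.Measure Ω) :=
  expected_phi_lower_bound_general gradQ hlam hLip hSM wstar hmin hfn hσ w x hx H T hH hT hTcard g
    hint hmean hint2 hvar
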